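/- arXiv:2012.08940 — 2 statements merged into one kernel-verified Lean document; each statement's English description precedes it below -/
import Mathlib

section
/- Let μ, M, M* be reals with 0 < μ ≤ M* ≤ M, let h ≥ 0, k > 0, and let d ∈ ℕ. For any reals x, x₁,…,x_d with x ≥ x̲ and xⱼ ≥ x̲ for all j, where x̲ ≤ M*, and assuming e^h − d·k ≥ 0, we have proj_{[μ,M]}( (e^h − d·k)·x + k·∑_{j=1}^d xⱼ ) ≥ min{ e^h · x̲, M* }. -/
theorem stmt_7 (μ M Mstar h k xb x : ℝ) (d : ℕ) (xs : Fin d → ℝ)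
    (hμ : 0 < μ) (hμM : μ ≤ Mstar) (hMM : Mstar ≤ M)
    (hh : 0 ≤ h) (hk : 0 < k)
    (hx : xb ≤ x) (hxs : ∀ j, xb ≤ xs j) (hxb : xb ≤ Mstar)
    (hkd : 0 ≤ Real.exp h - (d : ℝ) * k) :
    min (Real.exp h * xb) Mstar ≤
      min (max ((Real.exp h - (d : ℝ) * k) * x + k * ∑ j, xs j) μ) M := by
  have hsum : (d : ℝ) * xb ≤ ∑ j, xs j := by
    calc (d : ℝ) * xb = ∑ _j : Fin d, xb := by simp [mul_comm]
    _ ≤ ∑ j, xs j := Finset.sum_le_sum fun j _ => hxs j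
  have hs : Real.exp h * xb ≤ (Real.exp h - (d : ℝ) * k) * x + k * ∑ j, xs j := by
    have h1 : (Real.exp h - (d : ℝ) * k) * xb ≤ (Real.exp h - (d : ℝ) * k) * x :=
      mul_le_mul_of_nonneg_left hx hkd
    have h2 : k * ((d : ℝ) * xb) ≤ k * ∑ j, xs j :=
      mul_le_mul_of_nonneg_left hsum hk.le
    nlinarith
  refine le_min ?_ (le_trans (min_le_right _ _) hMM)
  exact le_trans (min_le_left _ _) (le_trans hs (le_max_left _ _))
end

section
/- Consider a finite set N of agents, numbers Mᵢ > 0, bounds 0 < μᵢ ≤ M* := minᵢ Mᵢ, gains kᵢ satisfying 0 < kᵢ ≤ 1/|[i]∖{i}| where [i] ⊆ N with i ∈ [i], and nonnegative signals hᵢ : ℕ → ℝ≥0. Let xᵢ evolve as xᵢ(t+1) = proj_{[μᵢ, Mᵢ]}( e^{hᵢ(t)} xᵢ(t) + kᵢ·∑_{j∈[i]} (xⱼ(t) − xᵢ(t)) ). If at some time t̄ one has min_{i∈N} xᵢ(t̄) ≥ M*, then min_{i∈N} xᵢ(t) ≥ M* for all t ≥ t̄. -/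
/-! Each neighbour contributes at least `M* - xᵢ ≤ 0` to the consensus sum, so the gain bound
`kᵢ · |[i] ∖ {i}| ≤ 1` makes the consensus term at least `M* - xᵢ`. Since `xᵢ ≥ M* > 0` and
`hᵢ ≥ 0`, the growth term `e^{hᵢ} xᵢ` is at least `xᵢ`, so the value before projection is at
least `M*`; projecting onto `[μᵢ, Mᵢ]` keeps it there because `Mᵢ ≥ M*`. -/

open Finset

lemma mul_natCast_le_one_of_le_one_div {κ : ℝ} {n : ℕ} (h : n ≠ 0 → κ ≤ 1 / n) :
    κ * n ≤ 1 := by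
  rcases eq_or_ne n 0 with rfl | hn
  · simp
  · rw [← le_div_iff₀ (by positivity)]
    exact h hn

lemma le_add_mul_sum_sub {ι : Type*} [DecidableEq ι] {s : Finset ι} {i : ι} (hi : i ∈ s)
    {x : ι → ℝ} {m κ : ℝ} (hx : ∀ j ∈ s, m ≤ x j) (hκ : 0 ≤ κ)
    (hκs : #(s.erase i) ≠ 0 → κ ≤ 1 / #(s.erase i)) :
    m ≤ x i + κ * ∑ j ∈ s, (x j - x i) := by
  set c : ℝ := (#(s.erase i) : ℝ)
  have hsum : ∑ j ∈ s, (x j - x i) = ∑ j ∈ s.erase i, (x j - x i) := by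
    rw [← add_sum_erase _ _ hi, sub_self, zero_add]
  have hsum_ge : c * (m - x i) ≤ ∑ j ∈ s.erase i, (x j - x i) := by
    simpa [nsmul_eq_mul] using card_nsmul_le_sum (s.erase i) (fun j => x j - x i) (m - x i)
      fun j hj => sub_le_sub_right (hx j (mem_of_mem_erase hj)) _
  have hκc : κ * c ≤ 1 := mul_natCast_le_one_of_le_one_div hκs
  have hgap : m - x i ≤ 0 := sub_nonpos.mpr (hx i hi)
  calc m = x i + (m - x i) := by ring
    _ ≤ x i + κ * (c * (m - x i)) := by nlinarith
    _ ≤ x i + κ * ∑ j ∈ s, (x j - x i) := by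
      rw [hsum]
      gcongr

theorem stmt_8_general {N : Type*} [DecidableEq N]
    (nbhd : N → Finset N) (hmem : ∀ i, i ∈ nbhd i)
    (M μ k : N → ℝ) (h : N → ℕ → ℝ) (Mstar : ℝ)
    (hMstar : IsLeast (Set.range M) Mstar)
    (hμ : ∀ i, 0 < μ i) (hμM : ∀ i, μ i ≤ Mstar)
    (hk : ∀ i, 0 < k i)
    (hk2 : ∀ i, ((nbhd i).erase i).card ≠ 0 →
      k i ≤ 1 / (((nbhd i).erase i).card : ℝ))
    (hh : ∀ i t, 0 ≤ h i t)
    (x : ℕ → N → ℝ)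
    (hdyn : ∀ t i, x (t + 1) i =
      min (max (Real.exp (h i t) * x t i +
        k i * ∑ j ∈ nbhd i, (x t j - x t i)) (μ i)) (M i))
    (tb : ℕ) (hinit : ∀ i, Mstar ≤ x tb i) :
    ∀ t, tb ≤ t → ∀ i, Mstar ≤ x t i := by
  obtain ⟨i₀, -⟩ := hMstar.1
  have hMstar_nonneg : 0 ≤ Mstar := (hμ i₀).le.trans (hμM i₀)
  intro t ht
  induction t, ht using Nat.le_induction with
  | base => exact hinit
  | succ t _ ih =>
    intro i
    rw [hdyn t i]
    refine le_min (le_max_of_le_left ?_) (hMstar.2 ⟨i, rfl⟩)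
    calc Mstar ≤ x t i + k i * ∑ j ∈ nbhd i, (x t j - x t i) :=
          le_add_mul_sum_sub (hmem i) (fun j _ => ih j) (hk i).le (hk2 i)
      _ ≤ Real.exp (h i t) * x t i + k i * ∑ j ∈ nbhd i, (x t j - x t i) := by
          gcongr
          exact le_mul_of_one_le_left (hMstar_nonneg.trans (ih i)) (Real.one_le_exp (hh i t))

theorem stmt_8 {N : Type*} [Fintype N] [DecidableEq N] [Nonempty N]
    (nbhd : N → Finset N) (hmem : ∀ i, i ∈ nbhd i)
    (M μ k : N → ℝ) (h : N → ℕ → ℝ) (Mstar : ℝ)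
    (hMstar : IsLeast (Set.range M) Mstar)
    (hμ : ∀ i, 0 < μ i) (hμM : ∀ i, μ i ≤ Mstar)
    (hk : ∀ i, 0 < k i)
    (hk2 : ∀ i, ((nbhd i).erase i).card ≠ 0 →
      k i ≤ 1 / (((nbhd i).erase i).card : ℝ))
    (hh : ∀ i t, 0 ≤ h i t)
    (x : ℕ → N → ℝ)
    (hdyn : ∀ t i, x (t + 1) i =
      min (max (Real.exp (h i t) * x t i +
        k i * ∑ j ∈ nbhd i, (x t j - x t i)) (μ i)) (M i))
    (tb : ℕ) (hinit : ∀ i, Mstar ≤ x tb i) :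
    ∀ t, tb ≤ t → ∀ i, Mstar ≤ x t i :=
  stmt_8_general nbhd hmem M μ k h Mstar hMstar hμ hμM hk hk2 hh x hdyn tb hinit
end
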